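/- Assume ν charges all open sets, U : C → U(H⊗H) is continuous with U(σ₀)=1 for some σ₀, Q is swap-invariant, and the collision specification is ergodic (the commutant of {U(σ)} equals the algebra generated by spectral projections of H_2). If a strictly positive density matrix ρ on finite-dimensional H satisfies ρ ⋆ ρ = ρ, then ρ commutes with h, ρ = Σ_e λ_e P_e (constant on eigenspaces of h), and whenever e_i + e_j = e_k + e_ℓ in Spec(h) one has λ_{e_i} λ_{e_j} = λ_{e_k} λ_{e_ℓ}. Conversely every such ρ satisfies ρ ⋆ ρ = ρ. -/

import Mathlib

open Matrix MeasureTheory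
open scoped Matrix.Norms.L2Operator ComplexOrder

/-- Tensor (Kronecker) product of operators on `H = ℂ^n`, as an operator on `H ⊗ H`. -/
def tensorMat {n : ℕ} (A B : Matrix (Fin n) (Fin n) ℂ) :
    Matrix (Fin n × Fin n) (Fin n × Fin n) ℂ :=
  Matrix.of fun p q => A p.1 q.1 * B p.2 q.2

/-- Partial trace over the second tensor factor. -/
noncomputable def ptrace2 {n : ℕ} (M : Matrix (Fin n × Fin n) (Fin n × Fin n) ℂ) :
    Matrix (Fin n) (Fin n) ℂ :=
  Matrix.of fun a b => ∑ k : Fin n, M (a, k) (b, k)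

/-- The tensor swap unitary on `H ⊗ H`. -/
def swapMat {n : ℕ} : Matrix (Fin n × Fin n) (Fin n × Fin n) ℂ :=
  Matrix.of fun p q => if p.1 = q.2 ∧ p.2 = q.1 then (1 : ℂ) else 0

/-- The averaged conjugation operator `Q(X) = ∫ U(σ) X U(σ)* dν(σ)` on `B(H ⊗ H)`. -/
noncomputable def Qop {C : Type*} [MeasurableSpace C] {n : ℕ}
    (ν : Measure C) (U : C → Matrix (Fin n × Fin n) (Fin n × Fin n) ℂ)
    (X : Matrix (Fin n × Fin n) (Fin n × Fin n) ℂ) :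
    Matrix (Fin n × Fin n) (Fin n × Fin n) ℂ :=
  ∫ σ, U σ * X * (U σ)ᴴ ∂ν

/-- The quantum Wild convolution `A ⋆ B = Tr₂[Q(A ⊗ B)]`. -/
noncomputable def wildConv {C : Type*} [MeasurableSpace C] {n : ℕ}
    (ν : Measure C) (U : C → Matrix (Fin n × Fin n) (Fin n × Fin n) ℂ)
    (A B : Matrix (Fin n) (Fin n) ℂ) : Matrix (Fin n) (Fin n) ℂ :=
  ptrace2 (Qop ν U (tensorMat A B))

/-- The spectral projection of `H_2` at energy `E`, for `h = diag(e)`. -/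
noncomputable def specProj2 {n : ℕ} (e : Fin n → ℝ) (E : ℝ) :
    Matrix (Fin n × Fin n) (Fin n × Fin n) ℂ :=
  Matrix.of fun p q => if p = q ∧ e p.1 + e p.2 = E then (1 : ℂ) else 0

/-- The spectral projection of `h = diag(e)` at eigenvalue `E`. -/
noncomputable def specProj1 {n : ℕ} (e : Fin n → ℝ) (E : ℝ) :
    Matrix (Fin n) (Fin n) ℂ :=
  Matrix.of fun a b => if a = b ∧ e a = E then (1 : ℂ) else 0

/-!
Write `Y = ρ ⊗ ρ` and `L = log Y = log ρ ⊗ 1 + 1 ⊗ log ρ`. The trace `Tr[X L]` depends only on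
the two one-particle marginals of `X`; for `X = Q(Y)` both are `ρ ⋆ ρ = ρ` (the first one by
swap invariance of `Q`), so `Tr[Q(Y) L] = Tr[Y L]`. Thus the relative entropies
`S(U(σ) Y U(σ)* ‖ Y) = Tr[Y L] - Tr[U(σ) Y U(σ)* L]` average to zero over `ν`. They are
nonnegative (Klein's inequality) and continuous in `σ`, and `ν` charges open sets, so they all
vanish, and the equality case of Klein's inequality says that every `U(σ)` commutes with `Y`.
By ergodicity `Y` is then diagonal with entries depending only on `e_i + e_j`, which forces `ρ`
to be diagonal with multiplicative weights. Conversely, for such `ρ` every `U(σ)` commutes with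
`Y`, so `Q(Y) = Y` and `ρ ⋆ ρ = Tr[ρ] ρ = ρ`.
-/

open scoped Kronecker
open InformationTheory

section Klein
variable {ι : Type*} [Fintype ι]

lemma mul_klFun_div {a b : ℝ} (ha : 0 < a) (hb : 0 < b) :
    a * klFun (b / a) = b * Real.log b - b * Real.log a + a - b := by
  rw [klFun, Real.log_div hb.ne' ha.ne']
  field_simp

lemma sum_mul_mul_klFun_div {w : ι → ι → ℝ} (hrow : ∀ i, ∑ j, w i j = 1)
    (hcol : ∀ j, ∑ i, w i j = 1) {μ : ι → ℝ} (hμ : ∀ i, 0 < μ i) :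
    ∑ i, ∑ j, w i j * (μ i * klFun (μ j / μ i))
      = ∑ j, μ j * Real.log (μ j) - ∑ i, ∑ j, w i j * (μ j * Real.log (μ i)) := by
  have hsum_col (f : ι → ℝ) : ∑ i, ∑ j, w i j * f j = ∑ j, f j := by
    rw [Finset.sum_comm]
    simp only [← Finset.sum_mul, hcol, one_mul]
  have hsum_row (f : ι → ℝ) : ∑ i, ∑ j, w i j * f i = ∑ i, f i := by
    simp only [← Finset.sum_mul, hrow, one_mul]
  simp only [mul_klFun_div (hμ _) (hμ _), mul_add, mul_sub, Finset.sum_add_distrib,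
    Finset.sum_sub_distrib, hsum_col, hsum_row]
  ring

variable [DecidableEq ι] {V U : Matrix ι ι ℂ} {μ : ι → ℝ}

lemma sum_norm_sq_row_of_mem_unitaryGroup {G : Matrix ι ι ℂ} (hG : G ∈ unitaryGroup ι ℂ)
    (i : ι) : ∑ j, ‖G i j‖ ^ 2 = 1 := by
  have h : (G * Gᴴ) i i = (1 : Matrix ι ι ℂ) i i := by
    rw [← star_eq_conjTranspose, Unitary.mul_star_self_of_mem hG]
  simp only [mul_apply, conjTranspose_apply, RCLike.star_def, Complex.mul_conj,
    Complex.normSq_eq_norm_sq, one_apply_eq] at h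
  exact_mod_cast h

lemma sum_norm_sq_col_of_mem_unitaryGroup {G : Matrix ι ι ℂ} (hG : G ∈ unitaryGroup ι ℂ)
    (j : ι) : ∑ i, ‖G i j‖ ^ 2 = 1 := by
  simpa [conjTranspose_apply] using
    sum_norm_sq_row_of_mem_unitaryGroup (Unitary.star_mem hG) j

lemma trace_conj_of_mem_unitaryGroup (hV : V ∈ unitaryGroup ι ℂ) (X : Matrix ι ι ℂ) :
    (V * X * Vᴴ).trace = X.trace := by
  rw [trace_mul_cycle, ← star_eq_conjTranspose, Unitary.star_mul_self_of_mem hV, one_mul]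

lemma trace_mul_diagonal_mul_conjTranspose_mul_diagonal (G : Matrix ι ι ℂ) (d d' : ι → ℂ) :
    (G * diagonal d * Gᴴ * diagonal d').trace
      = ∑ i, ∑ j, (‖G i j‖ ^ 2 : ℝ) * d j * d' i := by
  simp only [trace, diag, mul_diagonal]
  refine Finset.sum_congr rfl fun i _ => ?_
  rw [mul_apply, Finset.sum_mul]
  refine Finset.sum_congr rfl fun j _ => ?_
  rw [mul_diagonal, conjTranspose_apply, Complex.ofReal_pow, ← Complex.mul_conj', RCLike.star_def]
  ring

lemma trace_conj_diagonal_mul_conj_diagonal (hV : V ∈ unitaryGroup ι ℂ) (d d' : ι → ℂ) :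
    (U * (V * diagonal d * Vᴴ) * Uᴴ * (V * diagonal d' * Vᴴ)).trace
      = ∑ i, ∑ j, (‖(Vᴴ * U * V) i j‖ ^ 2 : ℝ) * d j * d' i := by
  have hVV : V * Vᴴ = 1 := by
    rw [← star_eq_conjTranspose]; exact Unitary.mul_star_self_of_mem hV
  rw [← trace_mul_diagonal_mul_conjTranspose_mul_diagonal,
    ← trace_conj_of_mem_unitaryGroup hV (_ * diagonal d')]
  simp only [conjTranspose_mul, conjTranspose_conjTranspose, Matrix.mul_assoc]
  rw [← Matrix.mul_assoc V Vᴴ, hVV, Matrix.one_mul]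

/-- The left side is the relative entropy `S(U A U* ‖ A)` of `A = V diag(μ) V*`; the right side
writes it as a sum of nonnegative terms (Klein's inequality). -/
lemma trace_mul_log_sub_trace_conj_mul_log (hV : V ∈ unitaryGroup ι ℂ)
    (hU : U ∈ unitaryGroup ι ℂ) (hμ : ∀ i, 0 < μ i) :
    (V * diagonal (fun i => (μ i : ℂ)) * Vᴴ *
        (V * diagonal (fun i => (Real.log (μ i) : ℂ)) * Vᴴ)).trace
      - (U * (V * diagonal (fun i => (μ i : ℂ)) * Vᴴ) * Uᴴ *
        (V * diagonal (fun i => (Real.log (μ i) : ℂ)) * Vᴴ)).trace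
      = ((∑ i, ∑ j, ‖(Vᴴ * U * V) i j‖ ^ 2 * (μ i * klFun (μ j / μ i)) : ℝ) : ℂ) := by
  have hG : Vᴴ * U * V ∈ unitaryGroup ι ℂ := mul_mem (mul_mem (Unitary.star_mem hV) hU) hV
  have hVV : Vᴴ * V = 1 := by
    rw [← star_eq_conjTranspose]; exact Unitary.star_mul_self_of_mem hV
  have htrace : (V * diagonal (fun i => (μ i : ℂ)) * Vᴴ *
      (V * diagonal (fun i => (Real.log (μ i) : ℂ)) * Vᴴ)).trace
        = ((∑ j, μ j * Real.log (μ j) : ℝ) : ℂ) := by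
    rw [show V * diagonal (fun i => (μ i : ℂ)) * Vᴴ *
        (V * diagonal (fun i => (Real.log (μ i) : ℂ)) * Vᴴ)
        = V * (diagonal (fun i => (μ i : ℂ)) * diagonal (fun i => (Real.log (μ i) : ℂ))) * Vᴴ by
      simp only [Matrix.mul_assoc, ← Matrix.mul_assoc Vᴴ V, hVV, Matrix.one_mul],
      trace_conj_of_mem_unitaryGroup hV, diagonal_mul_diagonal, trace_diagonal]
    push_cast
    rfl
  rw [htrace, trace_conj_diagonal_mul_conj_diagonal hV, sum_mul_mul_klFun_div
    (sum_norm_sq_row_of_mem_unitaryGroup hG) (sum_norm_sq_col_of_mem_unitaryGroup hG) hμ]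
  push_cast
  simp only [mul_assoc]

lemma re_trace_conj_mul_log_le (hV : V ∈ unitaryGroup ι ℂ) (hU : U ∈ unitaryGroup ι ℂ)
    (hμ : ∀ i, 0 < μ i) :
    (U * (V * diagonal (fun i => (μ i : ℂ)) * Vᴴ) * Uᴴ *
        (V * diagonal (fun i => (Real.log (μ i) : ℂ)) * Vᴴ)).trace.re
      ≤ (V * diagonal (fun i => (μ i : ℂ)) * Vᴴ *
        (V * diagonal (fun i => (Real.log (μ i) : ℂ)) * Vᴴ)).trace.re := by
  have h := congrArg Complex.re (trace_mul_log_sub_trace_conj_mul_log hV hU hμ)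
  rw [Complex.sub_re, Complex.ofReal_re] at h
  have : 0 ≤ ∑ i, ∑ j, ‖(Vᴴ * U * V) i j‖ ^ 2 * (μ i * klFun (μ j / μ i)) :=
    Finset.sum_nonneg fun i _ => Finset.sum_nonneg fun j _ =>
      mul_nonneg (sq_nonneg _) (mul_nonneg (hμ i).le (klFun_nonneg (div_pos (hμ j) (hμ i)).le))
  linarith

lemma commute_of_re_trace_conj_mul_log_eq (hV : V ∈ unitaryGroup ι ℂ)
    (hU : U ∈ unitaryGroup ι ℂ) (hμ : ∀ i, 0 < μ i)
    (h : (U * (V * diagonal (fun i => (μ i : ℂ)) * Vᴴ) * Uᴴ *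
        (V * diagonal (fun i => (Real.log (μ i) : ℂ)) * Vᴴ)).trace.re
      = (V * diagonal (fun i => (μ i : ℂ)) * Vᴴ *
        (V * diagonal (fun i => (Real.log (μ i) : ℂ)) * Vᴴ)).trace.re) :
    Commute U (V * diagonal (fun i => (μ i : ℂ)) * Vᴴ) := by
  set G := Vᴴ * U * V
  have hsum := congrArg Complex.re (trace_mul_log_sub_trace_conj_mul_log hV hU hμ)
  rw [Complex.sub_re, Complex.ofReal_re, h, sub_self, eq_comm] at hsum
  have hterm (i j : ι) : 0 ≤ ‖G i j‖ ^ 2 * (μ i * klFun (μ j / μ i)) :=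
    mul_nonneg (sq_nonneg _) (mul_nonneg (hμ i).le (klFun_nonneg (div_pos (hμ j) (hμ i)).le))
  have hG (i j : ι) (hij : G i j ≠ 0) : μ i = μ j := by
    have h0 := (Finset.sum_eq_zero_iff_of_nonneg fun j _ => hterm i j).mp
      ((Finset.sum_eq_zero_iff_of_nonneg fun i _ =>
        Finset.sum_nonneg fun j _ => hterm i j).mp hsum i (Finset.mem_univ _)) j
        (Finset.mem_univ _)
    rcases mul_eq_zero.mp h0 with h0 | h0
    · exact absurd (pow_eq_zero_iff two_ne_zero |>.mp h0) (norm_ne_zero_iff.mpr hij)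
    · have := (klFun_eq_zero_iff (div_pos (hμ j) (hμ i)).le).mp
        ((mul_eq_zero.mp h0).resolve_left (hμ i).ne')
      exact ((div_eq_one_iff_eq (hμ i).ne').mp this).symm
  have hGD : G * diagonal (fun i => (μ i : ℂ)) = diagonal (fun i => (μ i : ℂ)) * G := by
    ext i j
    rw [mul_diagonal, diagonal_mul]
    by_cases hij : G i j = 0
    · simp [hij]
    · rw [hG i j hij, mul_comm]
  have hVV : V * Vᴴ = 1 := by
    rw [← star_eq_conjTranspose]; exact Unitary.mul_star_self_of_mem hV
  have key := congrArg (fun X => V * X * Vᴴ) hGD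
  simp only [G, Matrix.mul_assoc, ← Matrix.mul_assoc V Vᴴ, hVV, Matrix.one_mul,
    Matrix.mul_one] at key
  simpa only [Commute, SemiconjBy, Matrix.mul_assoc] using key

end Klein

section Averaging
variable {C : Type*} [MeasurableSpace C] {ν : Measure C} {ι : Type*} [Fintype ι] [DecidableEq ι]
  {U : C → Matrix ι ι ℂ}

lemma integral_conj_eq_self [IsProbabilityMeasure ν] (hU : ∀ σ, U σ ∈ unitaryGroup ι ℂ)
    {X : Matrix ι ι ℂ} (h : ∀ σ, Commute (U σ) X) : ∫ σ, U σ * X * (U σ)ᴴ ∂ν = X := by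
  simp_rw [(h _).eq, Matrix.mul_assoc, ← star_eq_conjTranspose,
    Unitary.mul_star_self_of_mem (hU _), Matrix.mul_one, integral_const, probReal_univ, one_smul]

variable [TopologicalSpace C] [CompactSpace C] [OpensMeasurableSpace C]

lemma Continuous.integrable_conj [IsFiniteMeasure ν] (hU : Continuous U) (A : Matrix ι ι ℂ) :
    Integrable (fun σ => U σ * A * (U σ)ᴴ) ν :=
  ((hU.mul continuous_const).mul hU.matrix_conjTranspose).integrable_of_hasCompactSupport
    (HasCompactSupport.of_compactSpace _)

lemma trace_integral_conj_mul [IsFiniteMeasure ν] (hU : Continuous U) (A L : Matrix ι ι ℂ) :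
    ((∫ σ, U σ * A * (U σ)ᴴ ∂ν) * L).trace = ∫ σ, (U σ * A * (U σ)ᴴ * L).trace ∂ν :=
  (((traceLinearMap ι ℂ ℂ).comp (LinearMap.mulRight ℂ L)).toContinuousLinearMap.integral_comp_comm
    (hU.integrable_conj A)).symm

lemma commute_of_trace_integral_conj_mul_log_eq [IsProbabilityMeasure ν]
    [ν.IsOpenPosMeasure] (hUc : Continuous U) (hUu : ∀ σ, U σ ∈ unitaryGroup ι ℂ)
    {V : Matrix ι ι ℂ} (hV : V ∈ unitaryGroup ι ℂ) {μ : ι → ℝ} (hμ : ∀ i, 0 < μ i)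
    {A L : Matrix ι ι ℂ} (hA : A = V * diagonal (fun i => (μ i : ℂ)) * Vᴴ)
    (hL : L = V * diagonal (fun i => (Real.log (μ i) : ℂ)) * Vᴴ)
    (h : ((∫ σ, U σ * A * (U σ)ᴴ ∂ν) * L).trace = (A * L).trace) (σ : C) :
    Commute (U σ) A := by
  set gap : C → ℝ := fun σ => (A * L).trace.re - (U σ * A * (U σ)ᴴ * L).trace.re
  have hgap_nonneg : 0 ≤ gap := fun σ => by
    subst hA hL
    exact sub_nonneg.mpr (re_trace_conj_mul_log_le hV (hUu σ) hμ)
  have htrace_cont : Continuous fun σ => (U σ * A * (U σ)ᴴ * L).trace :=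
    (((hUc.mul continuous_const).mul hUc.matrix_conjTranspose).mul continuous_const).matrix_trace
  have htrace_int : Integrable (fun σ => (U σ * A * (U σ)ᴴ * L).trace) ν :=
    htrace_cont.integrable_of_hasCompactSupport (HasCompactSupport.of_compactSpace _)
  have hre_int : Integrable (fun σ => (U σ * A * (U σ)ᴴ * L).trace.re) ν := htrace_int.re
  have hgap_cont : Continuous gap := continuous_const.sub (Complex.continuous_re.comp htrace_cont)
  have hgap_int : ∫ σ, gap σ ∂ν = 0 := by
    have hre : ∫ σ, (U σ * A * (U σ)ᴴ * L).trace.re ∂ν = (A * L).trace.re := by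
      rw [← h, trace_integral_conj_mul hUc]
      exact integral_re htrace_int
    simp only [gap]
    rw [integral_sub (integrable_const _) hre_int, hre]
    simp
  have hgap : gap σ = 0 := by
    by_contra hne
    exact (integral_pos_of_integrable_nonneg_nonzero hgap_cont
      (hgap_cont.integrable_of_hasCompactSupport (HasCompactSupport.of_compactSpace _))
      hgap_nonneg hne).ne' hgap_int
  subst hA hL
  exact commute_of_re_trace_conj_mul_log_eq hV (hUu σ) hμ (sub_eq_zero.mp hgap).symm

end Averaging

lemma kronecker_conj_diagonal {ι κ : Type*} [Fintype ι] [DecidableEq ι] [Fintype κ]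
    [DecidableEq κ] (W : Matrix ι ι ℂ) (W' : Matrix κ κ ℂ) (d : ι → ℂ) (d' : κ → ℂ) :
    (W * diagonal d * Wᴴ) ⊗ₖ (W' * diagonal d' * W'ᴴ)
      = (W ⊗ₖ W') * diagonal (fun p => d p.1 * d' p.2) * (W ⊗ₖ W')ᴴ := by
  rw [mul_kronecker_mul, mul_kronecker_mul, diagonal_kronecker_diagonal, conjTranspose_kronecker]

lemma Matrix.PosDef.exists_eq_unitary_conj_diagonal {ι : Type*} [Fintype ι] [DecidableEq ι]
    {ρ : Matrix ι ι ℂ} (hρ : ρ.PosDef) :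
    ∃ W ∈ unitaryGroup ι ℂ, ∃ b : ι → ℝ, (∀ i, 0 < b i) ∧
      ρ = W * diagonal (fun i => (b i : ℂ)) * Wᴴ := by
  refine ⟨_, hρ.isHermitian.eigenvectorUnitary.2, _, hρ.eigenvalues_pos, ?_⟩
  conv_lhs => rw [hρ.isHermitian.spectral_theorem]
  rfl

section PartialTrace
variable {n : ℕ}

lemma tensorMat_eq_kronecker (A B : Matrix (Fin n) (Fin n) ℂ) : tensorMat A B = A ⊗ₖ B := rfl

lemma ptrace2_kronecker (A B : Matrix (Fin n) (Fin n) ℂ) : ptrace2 (A ⊗ₖ B) = B.trace • A := by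
  ext a b
  simp [ptrace2, trace, Finset.mul_sum, mul_comm]

lemma swapMat_mul_mul_conjTranspose (M : Matrix (Fin n × Fin n) (Fin n × Fin n) ℂ) :
    swapMat * M * swapMatᴴ = M.submatrix Prod.swap Prod.swap := by
  ext p q
  simp only [swapMat, ite_and, mul_apply, of_apply, ite_mul, one_mul, zero_mul,
    Fintype.sum_prod_type, Finset.sum_ite_eq, Finset.mem_univ, ↓reduceIte, conjTranspose_apply,
    apply_ite, star_one, star_zero, mul_one, mul_zero, submatrix_apply]
  rfl

lemma swapMat_mul_kronecker_mul_conjTranspose (A B : Matrix (Fin n) (Fin n) ℂ) :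
    swapMat * (A ⊗ₖ B) * swapMatᴴ = B ⊗ₖ A := by
  ext p q
  simp only [swapMat_mul_mul_conjTranspose, submatrix_apply, kroneckerMap_apply, Prod.fst_swap,
    Prod.snd_swap, mul_comm]

lemma trace_mul_kronecker_one (M : Matrix (Fin n × Fin n) (Fin n × Fin n) ℂ)
    (T : Matrix (Fin n) (Fin n) ℂ) : (M * (T ⊗ₖ 1)).trace = (ptrace2 M * T).trace := by
  simp only [trace, diag_apply, mul_apply, kroneckerMap_apply, one_apply, mul_ite, mul_one,
    mul_zero, Fintype.sum_prod_type, Finset.sum_ite_eq', Finset.mem_univ, ↓reduceIte, ptrace2,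
    of_apply, Finset.sum_mul]
  exact Finset.sum_congr rfl fun _ _ => Finset.sum_comm

lemma trace_mul_one_kronecker (M : Matrix (Fin n × Fin n) (Fin n × Fin n) ℂ)
    (T : Matrix (Fin n) (Fin n) ℂ) :
    (M * (1 ⊗ₖ T)).trace = (ptrace2 (swapMat * M * swapMatᴴ) * T).trace := by
  rw [swapMat_mul_mul_conjTranspose]
  simp only [trace, diag_apply, mul_apply, kroneckerMap_apply, one_apply, ite_mul, one_mul,
    zero_mul, mul_ite, mul_zero, Fintype.sum_prod_type, Finset.sum_ite_irrel,
    Finset.sum_const_zero, Finset.sum_ite_eq', Finset.mem_univ, ↓reduceIte, ptrace2,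
    submatrix_apply, Prod.swap_prod_mk, of_apply, Finset.sum_mul]
  rw [Finset.sum_comm]
  exact Finset.sum_congr rfl fun _ _ => Finset.sum_comm

lemma trace_mul_add_kronecker (M : Matrix (Fin n × Fin n) (Fin n × Fin n) ℂ)
    (T : Matrix (Fin n) (Fin n) ℂ) :
    (M * (T ⊗ₖ 1 + 1 ⊗ₖ T)).trace
      = (ptrace2 M * T).trace + (ptrace2 (swapMat * M * swapMatᴴ) * T).trace := by
  rw [Matrix.mul_add, trace_add, trace_mul_kronecker_one, trace_mul_one_kronecker]

end PartialTrace

section WildConvolution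
variable {C : Type*} [MeasurableSpace C] {ν : Measure C} [IsProbabilityMeasure ν] {n : ℕ}
  {U : C → Matrix (Fin n × Fin n) (Fin n × Fin n) ℂ} {ρ : Matrix (Fin n) (Fin n) ℂ}

lemma wildConv_self_eq_of_forall_commute (hUu : ∀ σ, U σ ∈ unitaryGroup (Fin n × Fin n) ℂ)
    (htr : ρ.trace = 1) (h : ∀ σ, Commute (U σ) (ρ ⊗ₖ ρ)) : wildConv ν U ρ ρ = ρ := by
  rw [wildConv, Qop, tensorMat_eq_kronecker, integral_conj_eq_self hUu h, ptrace2_kronecker, htr,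
    one_smul]

variable [TopologicalSpace C] [CompactSpace C] [OpensMeasurableSpace C]

lemma commute_of_wildConv_self_eq [ν.IsOpenPosMeasure] (hUc : Continuous U)
    (hUu : ∀ σ, U σ ∈ unitaryGroup (Fin n × Fin n) ℂ)
    (hswap : ∀ X, Qop ν U (swapMat * X * swapMatᴴ) = swapMat * Qop ν U X * swapMatᴴ)
    (hρ : ρ.PosDef) (htr : ρ.trace = 1) (hfix : wildConv ν U ρ ρ = ρ) (σ : C) :
    Commute (U σ) (ρ ⊗ₖ ρ) := by
  obtain ⟨W, hW, b, hb, rfl⟩ := hρ.exists_eq_unitary_conj_diagonal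
  set ρ := W * diagonal (fun i => (b i : ℂ)) * Wᴴ
  set T := W * diagonal (fun i => (Real.log (b i) : ℂ)) * Wᴴ
  have hY : ρ ⊗ₖ ρ = (W ⊗ₖ W) * diagonal (fun p => ((b p.1 * b p.2 : ℝ) : ℂ)) * (W ⊗ₖ W)ᴴ := by
    rw [kronecker_conj_diagonal]
    push_cast
    rfl
  have hL : T ⊗ₖ 1 + 1 ⊗ₖ T
      = (W ⊗ₖ W) * diagonal (fun p => (Real.log (b p.1 * b p.2) : ℂ)) * (W ⊗ₖ W)ᴴ := by
    have hone : (1 : Matrix (Fin n) (Fin n) ℂ) = W * diagonal (fun _ => 1) * Wᴴ := by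
      rw [diagonal_one, Matrix.mul_one, ← star_eq_conjTranspose, Unitary.mul_star_self_of_mem hW]
    rw [hone, kronecker_conj_diagonal, kronecker_conj_diagonal, ← Matrix.add_mul,
      ← Matrix.mul_add, diagonal_add]
    congr 3
    ext p
    simp [Real.log_mul (hb p.1).ne' (hb p.2).ne']
  have hmarg₂ : ptrace2 (Qop ν U (ρ ⊗ₖ ρ)) = ptrace2 (ρ ⊗ₖ ρ) := by
    rw [ptrace2_kronecker, htr, one_smul]
    exact hfix
  have hmarg₁ : ptrace2 (swapMat * Qop ν U (ρ ⊗ₖ ρ) * swapMatᴴ)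
      = ptrace2 (swapMat * (ρ ⊗ₖ ρ) * swapMatᴴ) := by
    rw [← hswap, swapMat_mul_kronecker_mul_conjTranspose, hmarg₂]
  refine commute_of_trace_integral_conj_mul_log_eq (ν := ν) hUc hUu (kronecker_mem_unitary hW hW)
    (fun p => mul_pos (hb p.1) (hb p.2)) hY hL ?_ σ
  show (Qop ν U (ρ ⊗ₖ ρ) * _).trace = _
  rw [trace_mul_add_kronecker, trace_mul_add_kronecker, hmarg₁, hmarg₂]

lemma wildConv_self_eq_iff_forall_commute [ν.IsOpenPosMeasure] (hUc : Continuous U)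
    (hUu : ∀ σ, U σ ∈ unitaryGroup (Fin n × Fin n) ℂ)
    (hswap : ∀ X, Qop ν U (swapMat * X * swapMatᴴ) = swapMat * Qop ν U X * swapMatᴴ)
    (hρ : ρ.PosDef) (htr : ρ.trace = 1) :
    wildConv ν U ρ ρ = ρ ↔ ∀ σ, Commute (U σ) (ρ ⊗ₖ ρ) :=
  ⟨commute_of_wildConv_self_eq hUc hUu hswap hρ htr, wildConv_self_eq_of_forall_commute hUu htr⟩

end WildConvolution

section SpectralProjections
variable {n : ℕ} (e : Fin n → ℝ)

lemma sum_smul_specProj1 (lam : ℝ → ℂ) :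
    ∑ E ∈ Finset.univ.image e, lam E • specProj1 e E = diagonal (fun i => lam (e i)) := by
  ext a b
  rw [Matrix.sum_apply]
  by_cases hab : a = b
  · subst hab
    simp [specProj1]
  · simp [specProj1, hab]

lemma sum_smul_specProj2 (c : ℝ → ℂ) :
    ∑ E ∈ Finset.univ.image (fun p : Fin n × Fin n => e p.1 + e p.2), c E • specProj2 e E
      = diagonal (fun p => c (e p.1 + e p.2)) := by
  ext p q
  rw [Matrix.sum_apply]
  by_cases hpq : p = q
  · subst hpq
    simp [specProj2]
  · simp [specProj2, hpq]

variable {e} {ρ : Matrix (Fin n) (Fin n) ℂ}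

lemma exists_kronecker_self_eq_diagonal_iff (hρ : ∀ i, ρ i i ≠ 0) :
    (∃ c : ℝ → ℂ, ρ ⊗ₖ ρ = diagonal (fun p => c (e p.1 + e p.2))) ↔
      ∃ lam : ℝ → ℂ, ρ = diagonal (fun i => lam (e i)) ∧
        ∀ i j k l, e i + e j = e k + e l → lam (e i) * lam (e j) = lam (e k) * lam (e l) := by
  constructor
  · rintro ⟨c, hc⟩
    have hentry (i j k l : Fin n) :
        ρ i k * ρ j l = if (i, j) = (k, l) then c (e i + e j) else 0 := by
      simpa [diagonal_apply] using congrFun (congrFun hc (i, j)) (k, l)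
    have hdiag (i j : Fin n) : ρ i i * ρ j j = c (e i + e j) := by simpa using hentry i j i j
    have hoff (i k : Fin n) (hik : i ≠ k) : ρ i k = 0 := by
      simpa [hik, hρ i] using hentry i i k i
    have hfactor : (fun i => ρ i i).FactorsThrough e := fun i j hij =>
      mul_right_cancel₀ (hρ j) (by rw [hdiag, hdiag, hij])
    refine ⟨Function.extend e (fun i => ρ i i) 0, ?_, fun i j k l hijkl => ?_⟩
    · ext i k
      rw [diagonal_apply, hfactor.extend_apply]
      split_ifs with hik
      · rw [hik]
      · exact hoff i k hik
    · simp only [hfactor.extend_apply, hdiag, hijkl]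
  · rintro ⟨lam, rfl, hmul⟩
    have hfactor : (fun p : Fin n × Fin n => lam (e p.1) * lam (e p.2)).FactorsThrough
        (fun p => e p.1 + e p.2) := fun p q hpq => hmul _ _ _ _ hpq
    refine ⟨Function.extend (fun p : Fin n × Fin n => e p.1 + e p.2)
      (fun p => lam (e p.1) * lam (e p.2)) 0, ?_⟩
    rw [diagonal_kronecker_diagonal]
    congr 1
    ext p
    exact (hfactor.extend_apply _ p).symm

end SpectralProjections

theorem steady_states_QKBE_general {C : Type*} [MetricSpace C] [CompactSpace C]
    [MeasurableSpace C] [BorelSpace C] {n : ℕ}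
    (ν : Measure C) [IsProbabilityMeasure ν]
    (hν : ∀ O : Set C, IsOpen O → O.Nonempty → 0 < ν O)
    (U : C → Matrix (Fin n × Fin n) (Fin n × Fin n) ℂ)
    (hUcont : Continuous U)
    (hUunit : ∀ σ, U σ ∈ Matrix.unitaryGroup (Fin n × Fin n) ℂ)
    (hswap : ∀ X : Matrix (Fin n × Fin n) (Fin n × Fin n) ℂ,
      Qop ν U (swapMat * X * swapMatᴴ) = swapMat * Qop ν U X * swapMatᴴ)
    (e : Fin n → ℝ)
    (hergodic : ∀ A : Matrix (Fin n × Fin n) (Fin n × Fin n) ℂ,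
      (∀ σ, Commute (U σ) A) ↔
        ∃ c : ℝ → ℂ,
          A = ∑ E ∈ Finset.univ.image (fun p : Fin n × Fin n => e p.1 + e p.2),
                c E • specProj2 e E)
    (ρ : Matrix (Fin n) (Fin n) ℂ) (hρpos : ρ.PosDef) (hρtr : ρ.trace = 1) :
    wildConv ν U ρ ρ = ρ ↔
      ∃ lam : ℝ → ℂ,
        ρ = ∑ E ∈ Finset.univ.image e, lam E • specProj1 e E ∧
        Commute ρ (Matrix.diagonal fun i => (e i : ℂ)) ∧
        ∀ i j k l : Fin n, e i + e j = e k + e l →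
          lam (e i) * lam (e j) = lam (e k) * lam (e l) := by
  have : ν.IsOpenPosMeasure := ⟨fun O hO hne => (hν O hO hne).ne'⟩
  rw [wildConv_self_eq_iff_forall_commute hUcont hUunit hswap hρpos hρtr, hergodic]
  simp only [sum_smul_specProj1, sum_smul_specProj2]
  rw [exists_kronecker_self_eq_diagonal_iff fun i => hρpos.diag_pos.ne']
  refine exists_congr fun lam => and_congr_right fun hρ => ?_
  rw [hρ]
  exact (and_iff_right (commute_diagonal _ _)).symm

/-- **Characterization of the steady states of the quantum Kac–Boltzmann equation**:
for an ergodic collision specification, a strictly positive density matrix `ρ` satisfies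
`ρ ⋆ ρ = ρ` if and only if `ρ = ∑_e λ_e P_e` is constant on the eigenspaces of `h`
(hence commutes with `h`) and `λ` is multiplicative over energy-conserving collisions:
`e_i + e_j = e_k + e_ℓ ⟹ λ_{e_i} λ_{e_j} = λ_{e_k} λ_{e_ℓ}`. -/
theorem steady_states_QKBE {C : Type*} [MetricSpace C] [CompactSpace C]
    [MeasurableSpace C] [BorelSpace C] {n : ℕ}
    (ν : Measure C) [IsProbabilityMeasure ν]
    (hν : ∀ O : Set C, IsOpen O → O.Nonempty → 0 < ν O)
    (U : C → Matrix (Fin n × Fin n) (Fin n × Fin n) ℂ)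
    (hUcont : Continuous U)
    (hUunit : ∀ σ, U σ ∈ Matrix.unitaryGroup (Fin n × Fin n) ℂ)
    (σ₀ : C) (hσ₀ : U σ₀ = 1)
    (hswap : ∀ X : Matrix (Fin n × Fin n) (Fin n × Fin n) ℂ,
      Qop ν U (swapMat * X * swapMatᴴ) = swapMat * Qop ν U X * swapMatᴴ)
    (e : Fin n → ℝ)
    (hergodic : ∀ A : Matrix (Fin n × Fin n) (Fin n × Fin n) ℂ,
      (∀ σ, Commute (U σ) A) ↔
        ∃ c : ℝ → ℂ,
          A = ∑ E ∈ Finset.univ.image (fun p : Fin n × Fin n => e p.1 + e p.2),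
                c E • specProj2 e E)
    (ρ : Matrix (Fin n) (Fin n) ℂ) (hρpos : ρ.PosDef) (hρtr : ρ.trace = 1) :
    wildConv ν U ρ ρ = ρ ↔
      ∃ lam : ℝ → ℂ,
        ρ = ∑ E ∈ Finset.univ.image e, lam E • specProj1 e E ∧
        Commute ρ (Matrix.diagonal fun i => (e i : ℂ)) ∧
        ∀ i j k l : Fin n, e i + e j = e k + e l →
          lam (e i) * lam (e j) = lam (e k) * lam (e l) :=
  steady_states_QKBE_general ν hν U hUcont hUunit hswap e hergodic ρ hρpos hρtr
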